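/- arXiv:1603.04258 — 3 statements merged into one kernel-verified Lean document; each statement's English description precedes it below -/
import Mathlib

section
/- Let G = G₁□G₂□⋯□G_k be the Cartesian product of finite connected simple graphs G₁,…,G_k. If u=(u₁,…,u_k) and v=(v₁,…,v_k) are vertices of G with σ_{G_i}(u_i,v_i)=σ_i, d_{G_i}(u_i,v_i)=d_i, and d=∑_{i=1}^k d_i, then σ_G(u,v) = σ₁σ₂⋯σ_k · C(d,d₁)·C(d−d₁,d₂)·C(d−d₁−d₂,d₃)⋯1, i.e. σ_G(u,v) = (∏_i σ_i) · d!/(d₁!d₂!⋯d_k!). -/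
open SimpleGraph Finset

/-- The number of shortest `u`-`v` paths (geodesics) in `G`:
the number of paths from `u` to `v` whose length equals the distance `d_G(u,v)`. -/
noncomputable def geodesicCount {V : Type*} (G : SimpleGraph V) (u v : V) : ℕ :=
  Nat.card {p : G.Walk u v // p.IsPath ∧ p.length = G.dist u v}

/-- The number of shortest `u`-`v` paths in `G` that pass through the vertex `x`. -/
noncomputable def geodesicCountThrough {V : Type*} (G : SimpleGraph V) (u v x : V) : ℕ :=
  Nat.card {p : G.Walk u v // p.IsPath ∧ p.length = G.dist u v ∧ x ∈ p.support}

/-- The Cartesian (box) product of a family of graphs: two tuples are adjacent iff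
they agree in all but one coordinate and differ by an edge in that coordinate. -/
def boxProdPi {ι : Type*} {V : ι → Type*} (G : ∀ i, SimpleGraph (V i)) :
    SimpleGraph (∀ i, V i) where
  Adj u v := ∃ i, (G i).Adj (u i) (v i) ∧ ∀ j, j ≠ i → u j = v j
  symm := by
    constructor
    rintro u v ⟨i, hadj, heq⟩
    exact ⟨i, hadj.symm, fun j hj => (heq j hj).symm⟩
  loopless := by
    constructor
    rintro u ⟨i, hadj, -⟩
    exact (G i).irrefl hadj


/-! A geodesic from `u` to `v` starts with an edge to a neighbour one step closer to `v`, so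
`w ↦ σ(w, v)` is the only function that equals `1` at `v` and satisfies `σ(u, v) = ∑ σ(w, v)`
over those neighbours `w` of `u`. In the product the distance is the sum of the coordinate
distances, so the neighbours of `u` one step closer to `v` are obtained by moving one coordinate
one step closer in its factor. The right-hand side `(∏ᵢ σᵢ) · d! / (d₁! ⋯ dₖ!)` obeys the same
recursion: summing over the moves in coordinate `i` leaves `σᵢ` unchanged (by the recursion in
`Gᵢ`) and lowers `dᵢ` by one, and Pascal's rule for multinomial coefficients adds up the results. -/

open Function
open scoped Nat

@[to_additive]
theorem Finset.prod_apply_update_of_mem {ι M : Type*} {V : ι → Type*} [CommMonoid M]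
    [DecidableEq ι] {s : Finset ι} {i : ι} (hi : i ∈ s) (F : ∀ j, V j → M) (u : ∀ j, V j)
    (x : V i) : ∏ j ∈ s, F j (update u i x j) = F i x * ∏ j ∈ s \ {i}, F j (u j) := by
  simp_rw [apply_update F u i x]
  exact prod_update_of_mem hi _ _

theorem Nat.multinomial_eq_sum_multinomial_update {α : Type*} [DecidableEq α] {s : Finset α}
    {d : α → ℕ} (h : ∑ i ∈ s, d i ≠ 0) :
    multinomial s d = ∑ i ∈ s with d i ≠ 0, multinomial s (update d i (d i - 1)) := by
  have key : ∀ i ∈ s, d i ≠ 0 →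
      (∏ j ∈ s, (d j)!) * multinomial s (update d i (d i - 1)) = d i * (∑ j ∈ s, d j - 1)! := by
    intro i hi hdi
    have hsum : ∑ j ∈ s, update d i (d i - 1) j = ∑ j ∈ s, d j - 1 := by
      rw [sum_update_of_mem hi, sum_eq_add_sum_sdiff_singleton_of_mem hi d]
      omega
    have hprod : ∏ j ∈ s, (d j)! = d i * ∏ j ∈ s, (update d i (d i - 1) j)! := by
      rw [prod_apply_update_of_mem hi (fun _ => factorial) d,
        prod_eq_mul_prod_sdiff_singleton_of_mem hi, ← mul_assoc, mul_factorial_pred hdi]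
    rw [hprod, mul_assoc, multinomial_spec, hsum]
  apply Nat.eq_of_mul_eq_mul_left (prod_factorial_pos s d)
  rw [multinomial_spec, mul_sum, sum_congr rfl fun i hi => key i (mem_filter.1 hi).1
    (mem_filter.1 hi).2, ← sum_mul, sum_filter_ne_zero, mul_factorial_pred h]

namespace SimpleGraph

variable {W : Type*} {G : SimpleGraph W}

theorem geodesicCount_eq_card_length_eq_dist (u v : W) :
    geodesicCount G u v = Nat.card {p : G.Walk u v // p.length = G.dist u v} :=
  Nat.card_congr <| Equiv.subtypeEquivRight fun p =>
    ⟨And.right, fun h => ⟨p.isPath_of_length_eq_dist h, h⟩⟩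

@[simp]
theorem geodesicCount_self (u : W) : geodesicCount G u u = 1 := by
  rw [geodesicCount_eq_card_length_eq_dist, dist_self, Nat.card_eq_one_iff_unique]
  refine ⟨⟨fun p q => Subtype.ext ?_⟩, ⟨⟨Walk.nil, rfl⟩⟩⟩
  rw [Walk.eq_nil_iff_nil.2 (Walk.length_eq_zero_iff.1 p.2),
    Walk.eq_nil_iff_nil.2 (Walk.length_eq_zero_iff.1 q.2)]

theorem geodesicCount_eq_zero_of_not_reachable {u v : W} (h : ¬G.Reachable u v) :
    geodesicCount G u v = 0 :=
  have : IsEmpty (G.Walk u v) := ⟨fun p => h p.reachable⟩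
  Nat.card_of_isEmpty

theorem Walk.dist_add_one_eq_of_length_cons_eq_dist {u w v : W} {h : G.Adj u w}
    {q : G.Walk w v} (hq : (q.cons h).length = G.dist u v) : G.dist w v + 1 = G.dist u v := by
  rw [← length_eq_dist_of_subwalk hq (q.isSubwalk_cons h), ← hq, length_cons]

theorem Reachable.exists_adj_dist_add_one_eq {u v : W} (hr : G.Reachable u v) (hne : u ≠ v) :
    ∃ w, G.Adj u w ∧ G.dist w v + 1 = G.dist u v := by
  obtain ⟨p, hp⟩ := hr.exists_walk_length_eq_dist
  cases p with
  | nil => exact absurd rfl hne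
  | cons h q => exact ⟨_, h, Walk.dist_add_one_eq_of_length_cons_eq_dist hp⟩

theorem Walk.le_length_add_of_adj_le {f : W → ℕ} (hf : ∀ a b, G.Adj a b → f a ≤ f b + 1)
    {u v : W} (p : G.Walk u v) : f u ≤ p.length + f v := by
  induction p with
  | nil => simp
  | cons h q ih =>
    have := hf _ _ h
    rw [length_cons]
    omega

theorem exists_walk_length_le_of_exists_adj_lt {f : W → ℕ} {v : W}
    (hf : ∀ u, u ≠ v → ∃ w, G.Adj u w ∧ f w < f u) (u : W) :
    ∃ p : G.Walk u v, p.length ≤ f u := by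
  induction hn : f u using Nat.strong_induction_on generalizing u with
  | _ n ih =>
    by_cases huv : u = v
    · subst huv
      exact ⟨Walk.nil, Nat.zero_le _⟩
    obtain ⟨w, hadj, hw⟩ := hf u huv
    obtain ⟨p, hp⟩ := ih (f w) (hn ▸ hw) w rfl
    exact ⟨p.cons hadj, by rw [Walk.length_cons]; omega⟩

theorem dist_eq_of_adj_le_of_exists_adj_lt {f : W → ℕ} {v : W} (hv : f v = 0)
    (hle : ∀ a b, G.Adj a b → f a ≤ f b + 1) (hlt : ∀ u, u ≠ v → ∃ w, G.Adj u w ∧ f w < f u)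
    (u : W) : G.dist u v = f u := by
  obtain ⟨p, hp⟩ := exists_walk_length_le_of_exists_adj_lt hlt u
  obtain ⟨q, hq⟩ := p.reachable.exists_walk_length_eq_dist
  have := q.le_length_add_of_adj_le hle
  have := dist_le p
  omega

noncomputable def closerNeighborFinset (G : SimpleGraph W) [LocallyFinite G] (u v : W) : Finset W :=
  {w ∈ G.neighborFinset u | G.dist w v + 1 = G.dist u v}

variable [LocallyFinite G]

@[simp]
theorem mem_closerNeighborFinset {u v w : W} :
    w ∈ G.closerNeighborFinset u v ↔ G.Adj u w ∧ G.dist w v + 1 = G.dist u v := by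
  rw [closerNeighborFinset, mem_filter, mem_neighborFinset]

theorem closerNeighborFinset_eq_empty_of_dist_eq_zero {u v : W} (h : G.dist u v = 0) :
    G.closerNeighborFinset u v = ∅ :=
  eq_empty_of_forall_notMem fun w hw => by
    have := (mem_closerNeighborFinset.1 hw).2
    omega

theorem geodesicCount_eq_sum_closerNeighborFinset {u v : W} (h : G.dist u v ≠ 0) :
    geodesicCount G u v = ∑ w ∈ G.closerNeighborFinset u v, geodesicCount G w v := by
  classical
  have hcons : Bijective fun a : (Σ w : G.closerNeighborFinset u v,
      {q : G.Walk w v // q.length = G.dist w v}) =>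
      (⟨a.2.1.cons (mem_closerNeighborFinset.1 a.1.2).1, by
        rw [Walk.length_cons, a.2.2, (mem_closerNeighborFinset.1 a.1.2).2]⟩ :
        {p : G.Walk u v // p.length = G.dist u v}) := by
    constructor
    · rintro ⟨⟨w, hw⟩, q, hq⟩ ⟨⟨w', hw'⟩, q', hq'⟩ he
      simp only [Subtype.mk.injEq, Walk.cons.injEq] at he
      obtain ⟨rfl, he⟩ := he
      obtain rfl := eq_of_heq he
      rfl
    · rintro ⟨_ | ⟨hadj, q⟩, hp⟩
      · exact absurd hp.symm h
      · exact ⟨⟨⟨_, mem_closerNeighborFinset.2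
          ⟨hadj, Walk.dist_add_one_eq_of_length_cons_eq_dist hp⟩⟩,
          q, length_eq_dist_of_subwalk hp (q.isSubwalk_cons hadj)⟩, rfl⟩
  rw [geodesicCount_eq_card_length_eq_dist, ← Nat.card_congr (Equiv.ofBijective _ hcons),
    Nat.card_sigma]
  simp_rw [geodesicCount_eq_card_length_eq_dist]
  exact sum_coe_sort _ fun w => Nat.card {q : G.Walk w v // q.length = G.dist w v}

theorem geodesicCount_eq_of_eq_sum_closerNeighborFinset {v : W} (g : W → ℕ) (hv : g v = 1)
    (hg : ∀ u, u ≠ v → g u = ∑ w ∈ G.closerNeighborFinset u v, g w) (u : W) :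
    geodesicCount G u v = g u := by
  induction hd : G.dist u v generalizing u with
  | zero =>
    by_cases huv : u = v
    · rw [huv, geodesicCount_self, hv]
    have hnr : ¬G.Reachable u v := by
      simpa [huv] using dist_eq_zero_iff_eq_or_not_reachable.1 hd
    rw [geodesicCount_eq_zero_of_not_reachable hnr, hg u huv,
      closerNeighborFinset_eq_empty_of_dist_eq_zero hd, sum_empty]
  | succ n ih =>
    have huv : u ≠ v := by
      rintro rfl
      simp at hd
    rw [geodesicCount_eq_sum_closerNeighborFinset (by omega), hg u huv]
    refine sum_congr rfl fun w hw => ih w ?_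
    have := (mem_closerNeighborFinset.1 hw).2
    omega

end SimpleGraph

section BoxProdPi

open SimpleGraph

variable {ι : Type*} {V : ι → Type*} {G : ∀ i, SimpleGraph (V i)}

theorem boxProdPi_adj_update_iff [DecidableEq ι] {u : ∀ i, V i} {i : ι} {x : V i} :
    (boxProdPi G).Adj u (update u i x) ↔ (G i).Adj (u i) x := by
  refine ⟨fun ⟨j, hj, _⟩ => ?_,
    fun h => ⟨i, by simpa using h, fun j hj => (update_of_ne hj _ _).symm⟩⟩
  rcases eq_or_ne j i with rfl | hji
  · simpa using hj
  · simp [update_of_ne hji] at hj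

theorem boxProdPi_adj_iff_exists_update [DecidableEq ι] {u w : ∀ i, V i} :
    (boxProdPi G).Adj u w ↔ ∃ i x, (G i).Adj (u i) x ∧ update u i x = w := by
  refine ⟨fun ⟨i, h, hother⟩ => ⟨i, w i, h, funext fun j => ?_⟩, ?_⟩
  · rcases eq_or_ne j i with rfl | hji
    · simp
    · rw [update_of_ne hji, hother j hji]
  · rintro ⟨i, x, h, rfl⟩
    exact boxProdPi_adj_update_iff.2 h

theorem dist_boxProdPi [Fintype ι] (hconn : ∀ i, (G i).Connected) (u v : ∀ i, V i) :
    (boxProdPi G).dist u v = ∑ i, (G i).dist (u i) (v i) := by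
  classical
  refine dist_eq_of_adj_le_of_exists_adj_lt (v := v)
    (f := fun w => ∑ i, (G i).dist (w i) (v i)) (by simp) (fun a b hab => ?_) (fun w hw => ?_) u
  · obtain ⟨i, x, hx, rfl⟩ := boxProdPi_adj_iff_exists_update.1 hab
    have := hx.symm.diff_dist_adj (u := v i)
    simp only [sum_apply_update_of_mem (mem_univ i) (fun j y => (G j).dist y (v j)),
      sum_eq_add_sum_sdiff_singleton_of_mem (mem_univ i) (fun j => (G j).dist (a j) (v j)),
      dist_comm (v := v i)] at this ⊢
    omega
  · obtain ⟨i, hi⟩ := ne_iff.1 hw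
    obtain ⟨x, hx, hdx⟩ := ((hconn i).preconnected _ _).exists_adj_dist_add_one_eq hi
    refine ⟨update w i x, boxProdPi_adj_update_iff.2 hx, ?_⟩
    simp only [sum_apply_update_of_mem (mem_univ i) (fun j y => (G j).dist y (v j)),
      sum_eq_add_sum_sdiff_singleton_of_mem (mem_univ i) (fun j => (G j).dist (w j) (v j))]
    omega

theorem dist_boxProdPi_update_add_one_iff [Fintype ι] [DecidableEq ι]
    (hconn : ∀ i, (G i).Connected) {u v : ∀ i, V i} {i : ι} {x : V i} :
    (boxProdPi G).dist (update u i x) v + 1 = (boxProdPi G).dist u v ↔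
      (G i).dist x (v i) + 1 = (G i).dist (u i) (v i) := by
  simp only [dist_boxProdPi hconn,
    sum_apply_update_of_mem (mem_univ i) (fun j y => (G j).dist y (v j)),
    sum_eq_add_sum_sdiff_singleton_of_mem (mem_univ i) (fun j => (G j).dist (u j) (v j))]
  omega

theorem sum_closerNeighborFinset_boxProdPi {M : Type*} [AddCommMonoid M] [Fintype ι]
    [DecidableEq ι] [∀ i, LocallyFinite (G i)] [LocallyFinite (boxProdPi G)]
    (hconn : ∀ i, (G i).Connected) (u v : ∀ i, V i) (g : (∀ i, V i) → M) :
    ∑ w ∈ (boxProdPi G).closerNeighborFinset u v, g w =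
      ∑ i, ∑ x ∈ (G i).closerNeighborFinset (u i) (v i), g (update u i x) := by
  rw [sum_sigma']
  refine (sum_bij (fun a _ => update u a.1 a.2) (fun a ha => ?_) (fun a ha b hb he => ?_)
    (fun w hw => ?_) fun _ _ => rfl).symm
  · simp only [mem_sigma, mem_closerNeighborFinset] at ha ⊢
    exact ⟨boxProdPi_adj_update_iff.2 ha.2.1, (dist_boxProdPi_update_add_one_iff hconn).2 ha.2.2⟩
  · obtain ⟨i, x⟩ := a
    obtain ⟨j, y⟩ := b
    simp only [mem_sigma, mem_closerNeighborFinset] at ha hb he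
    rcases eq_or_ne i j with rfl | hij
    · simpa using congrFun he i
    · have hx := congrFun he i
      rw [update_self, update_of_ne hij] at hx
      exact absurd hx ha.2.1.ne.symm
  · rw [mem_closerNeighborFinset] at hw
    obtain ⟨i, x, hx, rfl⟩ := boxProdPi_adj_iff_exists_update.1 hw.1
    exact ⟨⟨i, x⟩, mem_sigma.2 ⟨mem_univ _, mem_closerNeighborFinset.2
      ⟨hx, (dist_boxProdPi_update_add_one_iff hconn).1 hw.2⟩⟩, rfl⟩

theorem sum_closerNeighborFinset_prod_geodesicCount_mul_multinomial [Fintype ι]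
    [DecidableEq ι] [∀ i, LocallyFinite (G i)] (u v : ∀ i, V i) (i : ι) :
    ∑ x ∈ (G i).closerNeighborFinset (u i) (v i),
        (∏ j, geodesicCount (G j) (update u i x j) (v j)) *
          Nat.multinomial univ (fun j => (G j).dist (update u i x j) (v j)) =
      if (G i).dist (u i) (v i) ≠ 0 then
        (∏ j, geodesicCount (G j) (u j) (v j)) * Nat.multinomial univ
          (update (fun j => (G j).dist (u j) (v j)) i ((G i).dist (u i) (v i) - 1))
      else 0 := by
  split_ifs with hi
  · set C := (∏ j ∈ univ \ {i}, geodesicCount (G j) (u j) (v j)) * Nat.multinomial univ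
      (update (fun j => (G j).dist (u j) (v j)) i ((G i).dist (u i) (v i) - 1)) with hC
    have hterm : ∀ x ∈ (G i).closerNeighborFinset (u i) (v i),
        (∏ j, geodesicCount (G j) (update u i x j) (v j)) *
          Nat.multinomial univ (fun j => (G j).dist (update u i x j) (v j)) =
        geodesicCount (G i) x (v i) * C := by
      intro x hx
      have hdx : (G i).dist x (v i) = (G i).dist (u i) (v i) - 1 := by
        have := (mem_closerNeighborFinset.1 hx).2
        omega
      simp_rw [hC, prod_apply_update_of_mem (mem_univ i) (fun j y => geodesicCount (G j) y (v j)),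
        apply_update (fun j y => (G j).dist y (v j)), hdx, mul_assoc]
    rw [sum_congr rfl hterm, ← sum_mul, ← geodesicCount_eq_sum_closerNeighborFinset hi, hC,
      prod_eq_mul_prod_sdiff_singleton_of_mem (mem_univ i), mul_assoc]
  · rw [closerNeighborFinset_eq_empty_of_dist_eq_zero (not_not.1 hi), sum_empty]

theorem geodesicCount_boxProdPi_eq_prod_mul_multinomial [Fintype ι] [DecidableEq ι]
    [∀ i, Finite (V i)] (hconn : ∀ i, (G i).Connected) (u v : ∀ i, V i) :
    geodesicCount (boxProdPi G) u v = (∏ i, geodesicCount (G i) (u i) (v i)) *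
      Nat.multinomial univ fun i => (G i).dist (u i) (v i) := by
  have : ∀ i, LocallyFinite (G i) := fun _ _ => Fintype.ofFinite _
  have : LocallyFinite (boxProdPi G) := fun _ => Fintype.ofFinite _
  refine geodesicCount_eq_of_eq_sum_closerNeighborFinset (v := v)
    (fun w => (∏ i, geodesicCount (G i) (w i) (v i)) *
      Nat.multinomial univ fun i => (G i).dist (w i) (v i))
    (by simp [Nat.multinomial]) (fun w hw => ?_) u
  have hd : ∑ i, (G i).dist (w i) (v i) ≠ 0 := fun h =>
    hw <| funext fun i => (hconn i).dist_eq_zero_iff.1 (sum_eq_zero_iff.1 h i (mem_univ i))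
  rw [sum_closerNeighborFinset_boxProdPi hconn,
    sum_congr rfl fun i _ => sum_closerNeighborFinset_prod_geodesicCount_mul_multinomial w v i,
    ← sum_filter, ← mul_sum, ← Nat.multinomial_eq_sum_multinomial_update hd]

end BoxProdPi

/-- For the Cartesian product `G = G₁ □ ⋯ □ Gₖ` of finite connected
graphs, with `σᵢ = σ_{Gᵢ}(uᵢ,vᵢ)`, `dᵢ = d_{Gᵢ}(uᵢ,vᵢ)` and `d = ∑ dᵢ`, the number of
shortest `u`-`v` paths is `σ_G(u,v) = (∏ᵢ σᵢ) · C(d,d₁)·C(d−d₁,d₂)⋯1 = (∏ᵢ σᵢ) · d!/(d₁!⋯dₖ!)`,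
the latter factor being the multinomial coefficient of `(d₁, …, dₖ)`. -/
theorem geodesicCount_boxProdPi {k : ℕ} {V : Fin k → Type*} [∀ i, Fintype (V i)]
    (G : ∀ i, SimpleGraph (V i)) (hconn : ∀ i, (G i).Connected)
    (u v : ∀ i, V i) (σ d : Fin k → ℕ)
    (hσ : ∀ i, geodesicCount (G i) (u i) (v i) = σ i)
    (hd : ∀ i, (G i).dist (u i) (v i) = d i) :
    geodesicCount (boxProdPi G) u v = (∏ i, σ i) * Nat.multinomial Finset.univ d := by
  rw [geodesicCount_boxProdPi_eq_prod_mul_multinomial hconn, prod_congr rfl fun i _ => hσ i,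
    Nat.multinomial_congr fun i _ => hd i]
end

section
/- Let G and H be finite connected simple graphs, let u=(g,h), v=(g',h') be distinct vertices of G□H, and let x=(g₀,h₀) be a vertex of G□H distinct from u and v. Then the pair-dependency satisfies δ_{G□H}(u,v|x) = δ_G(g,g'|g₀) · δ_H(h,h'|h₀) · (d₁·d₂)/d, where d₁ = C(d_G(g,g₀)+d_H(h,h₀), d_G(g,g₀)), d₂ = C(d_G(g₀,g')+d_H(h₀,h'), d_G(g₀,g')), and d = C(d_G(g,g')+d_H(h,h'), d_G(g,g')). -/
/-!
A geodesic through `x` splits at `x` into two geodesics, and conversely two geodesics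
`u ⟶ x ⟶ v` concatenate to a geodesic when `d(u,x) + d(x,v) = d(u,v)`; so
`σ(u,v|x) = σ(u,x) σ(x,v)` in that case and `σ(u,v|x) = 0` otherwise.

In `G □ H` distances add, and a walk is the same thing as its projections to `G` and `H`
together with the word recording which of its steps move in `G`. A walk is a geodesic exactly
when both projections are, so `σ_{G□H}((g,h),(g',h')) = σ_G(g,g') σ_H(h,h') C(d_G + d_H, d_G)`.
Substituting these counts into `δ = σ(u,v|x) / σ(u,v)` gives the formula, the binomial factors
producing `d₁ d₂ / d`.
-/

open SimpleGraph Finset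

/-- The pair-dependency of the pair `{u,v}` on `x`:
`δ(u,v|x) = σ(u,v|x) / σ(u,v)`. -/
noncomputable def pairDependency {V : Type*} (G : SimpleGraph V) (u v x : V) : ℚ :=
  (geodesicCountThrough G u v x : ℚ) / (geodesicCount G u v : ℚ)

namespace List

instance finite_bool_count (k m : ℕ) :
    Finite {L : List Bool // L.count true = k ∧ L.count false = m} :=
  ((finite_length_eq Bool (k + m)).subset fun L hL => by
    simp [← hL.1, ← hL.2, count_true_add_count_false]).to_subtype

theorem card_bool_count_eq_choose : ∀ k m : ℕ,
    Nat.card {L : List Bool // L.count true = k ∧ L.count false = m} = (k + m).choose k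
  | 0, m => by
    rw [Nat.choose_zero_right, Nat.card_eq_one_iff_exists]
    refine ⟨⟨replicate m false, by simp [count_replicate], by simp⟩,
      fun ⟨L, h₁, h₂⟩ => Subtype.ext ?_⟩
    show L = replicate m false
    rw [← h₂, eq_replicate_iff, ← count_true_add_count_false, h₁]
    simpa using count_eq_zero.1 h₁
  | k + 1, 0 => by
    rw [Nat.add_zero, Nat.choose_self, Nat.card_eq_one_iff_exists]
    refine ⟨⟨replicate (k + 1) true, by simp, by simp [count_replicate]⟩,
      fun ⟨L, h₁, h₂⟩ => Subtype.ext ?_⟩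
    show L = replicate (k + 1) true
    rw [← h₁, eq_replicate_iff, ← count_true_add_count_false, h₂]
    simpa using count_eq_zero.1 h₂
  | k + 1, m + 1 => by
    let consHead : {L : List Bool // L.count true = k ∧ L.count false = m + 1} ⊕
        {L : List Bool // L.count true = k + 1 ∧ L.count false = m} →
        {L : List Bool // L.count true = k + 1 ∧ L.count false = m + 1}
      | .inl L => ⟨true :: L.1, by simp [L.2.1, L.2.2]⟩
      | .inr L => ⟨false :: L.1, by simp [L.2.1, L.2.2]⟩
    have hbij : Function.Bijective consHead := by
      refine ⟨?_, ?_⟩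
      · rintro (⟨L, hL⟩ | ⟨L, hL⟩) (⟨L', hL'⟩ | ⟨L', hL'⟩) h <;> simp_all [consHead]
      · rintro ⟨_ | ⟨_ | _, L⟩, h₁, h₂⟩
        · simp at h₁
        · exact ⟨.inr ⟨L, by simpa using h₁, by simpa using h₂⟩, rfl⟩
        · exact ⟨.inl ⟨L, by simpa using h₁, by simpa using h₂⟩, rfl⟩
    rw [← Nat.card_eq_of_bijective consHead hbij, Nat.card_sum,
      card_bool_count_eq_choose k (m + 1), card_bool_count_eq_choose (k + 1) m,
      show k + 1 + (m + 1) = k + (m + 1) + 1 by omega, Nat.choose_succ_succ,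
      show k + (m + 1) = k + 1 + m by omega]

end List

namespace SimpleGraph

variable {α β : Type*} {G : SimpleGraph α} {H : SimpleGraph β}

lemma dist_boxProd {x y : α × β} (hG : G.Reachable x.1 y.1) (hH : H.Reachable x.2 y.2) :
    (G □ H).dist x y = G.dist x.1 y.1 + H.dist x.2 y.2 := by
  rw [dist, dist, dist, edist_boxProd,
    ENat.toNat_add (edist_ne_top_iff_reachable.2 hG) (edist_ne_top_iff_reachable.2 hH)]

abbrev Geodesic (G : SimpleGraph α) (u v : α) : Type _ :=
  {p : G.Walk u v // p.length = G.dist u v}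

namespace Walk

section Split

variable {u v x : α}

theorem append_inj {q q' : G.Walk u x} {r r' : G.Walk x v}
    (h : q.append r = q'.append r') (hl : q.length = q'.length) : q = q' ∧ r = r' := by
  have hd := congrArg darts h
  rw [darts_append, darts_append] at hd
  obtain ⟨hq, hr⟩ := List.append_inj hd (by simpa using hl)
  exact ⟨darts_injective hq, darts_injective hr⟩

theorem length_takeUntil_dropUntil_eq_dist [DecidableEq α] {p : G.Walk u v}
    (hp : p.length = G.dist u v) (hx : x ∈ p.support) :
    (p.takeUntil x hx).length = G.dist u x ∧ (p.dropUntil x hx).length = G.dist x v := by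
  have hle₁ := dist_le (p.takeUntil x hx)
  have hle₂ := dist_le (p.dropUntil x hx)
  have hsplit : (p.takeUntil x hx).length + (p.dropUntil x hx).length = p.length := by
    rw [← length_append, take_spec]
  have htri := Reachable.dist_triangle_right ⟨p.dropUntil x hx⟩ u
  omega

end Split

variable {a a' : α} {b b' : β} {y : α × β}

section OfBoxProdLeft

variable [DecidableEq β] [DecidableRel G.Adj]

@[simp]
lemma ofBoxProdLeft_cons_left (h : (G □ H).Adj (a, b) (a', b)) (p : (G □ H).Walk (a', b) y) :
    (cons h p).ofBoxProdLeft = cons (boxProd_adj_left.1 h) p.ofBoxProdLeft := by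
  simp [ofBoxProdLeft, Or.by_cases, boxProd_adj_left.1 h]

@[simp]
lemma ofBoxProdLeft_cons_right (h : (G □ H).Adj (a, b) (a, b')) (p : (G □ H).Walk (a, b') y) :
    (cons h p).ofBoxProdLeft = p.ofBoxProdLeft := by
  simp [ofBoxProdLeft, Or.by_cases, (boxProd_adj_right.1 h).ne]

end OfBoxProdLeft

section OfBoxProdRight

variable [DecidableEq α] [DecidableRel H.Adj]

@[simp]
lemma ofBoxProdRight_cons_left (h : (G □ H).Adj (a, b) (a', b)) (p : (G □ H).Walk (a', b) y) :
    (cons h p).ofBoxProdRight = p.ofBoxProdRight := by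
  simp [ofBoxProdRight, Or.by_cases, (boxProd_adj_left.1 h).ne]

@[simp]
lemma ofBoxProdRight_cons_right (h : (G □ H).Adj (a, b) (a, b')) (p : (G □ H).Walk (a, b') y) :
    (cons h p).ofBoxProdRight = cons (boxProd_adj_right.1 h) p.ofBoxProdRight := by
  simp [ofBoxProdRight, Or.by_cases, boxProd_adj_right.1 h]

end OfBoxProdRight

/-- `true` marks a step that moves in `G`, `false` a step that moves in `H`. -/
def boxProdDirections [DecidableRel G.Adj] [DecidableEq β] :
    {x y : α × β} → (G □ H).Walk x y → List Bool
  | _, _, nil => []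
  | x, _, cons (v := z) _ p => decide (G.Adj x.1 z.1 ∧ x.2 = z.2) :: p.boxProdDirections

section Directions

variable [DecidableRel G.Adj] [DecidableEq β]

@[simp]
lemma boxProdDirections_cons_left (h : (G □ H).Adj (a, b) (a', b))
    (p : (G □ H).Walk (a', b) y) :
    (cons h p).boxProdDirections = true :: p.boxProdDirections := by
  simp [boxProdDirections, boxProd_adj_left.1 h]

@[simp]
lemma boxProdDirections_cons_right (h : (G □ H).Adj (a, b) (a, b'))
    (p : (G □ H).Walk (a, b') y) :
    (cons h p).boxProdDirections = false :: p.boxProdDirections := by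
  simp [boxProdDirections, (boxProd_adj_right.1 h).ne]

theorem count_true_boxProdDirections {x y : α × β} (p : (G □ H).Walk x y) :
    p.boxProdDirections.count true = p.ofBoxProdLeft.length := by
  induction p with
  | nil => rfl
  | @cons x z y h p ih =>
    obtain ⟨x₁, x₂⟩ := x
    obtain ⟨z₁, z₂⟩ := z
    rcases boxProd_adj.1 h with ⟨-, rfl⟩ | ⟨-, rfl⟩ <;> simp [ih]

theorem count_false_boxProdDirections [DecidableEq α] [DecidableRel H.Adj] {x y : α × β}
    (p : (G □ H).Walk x y) :
    p.boxProdDirections.count false = p.ofBoxProdRight.length := by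
  induction p with
  | nil => rfl
  | @cons x z y h p ih =>
    obtain ⟨x₁, x₂⟩ := x
    obtain ⟨z₁, z₂⟩ := z
    rcases boxProd_adj.1 h with ⟨-, rfl⟩ | ⟨-, rfl⟩ <;> simp [ih]

end Directions

/-- Follows `q` at each `true` and `r` at each `false` of the word; the last clause is a default
for words that do not match the lengths of `q` and `r`. -/
def boxProdInterleave : List Bool → {a a' : α} → {b b' : β} →
    G.Walk a a' → H.Walk b b' → (G □ H).Walk (a, b) (a', b')
  | true :: L, _, _, _, _, cons h q, r => cons (boxProd_adj_left.2 h) (boxProdInterleave L q r)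
  | false :: L, _, _, _, _, q, cons h r => cons (boxProd_adj_right.2 h) (boxProdInterleave L q r)
  | _, _, _, b, _, q, r => (q.boxProdLeft H b).append (r.boxProdRight G _)

theorem boxProdInterleave_spec [DecidableEq α] [DecidableEq β] [DecidableRel G.Adj]
    [DecidableRel H.Adj] (L : List Bool) (q : G.Walk a a') (r : H.Walk b b')
    (hq : q.length = L.count true) (hr : r.length = L.count false) :
    (boxProdInterleave L q r).boxProdDirections = L ∧
      (boxProdInterleave L q r).ofBoxProdLeft = q ∧
      (boxProdInterleave L q r).ofBoxProdRight = r := by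
  induction L generalizing a b with
  | nil => cases q <;> cases r <;> first | exact ⟨rfl, rfl, rfl⟩ | simp at hq hr
  | cons d L ih =>
    cases d
    · cases r with
      | nil => simp at hr
      | cons h r => simp_all [boxProdInterleave]
    · cases q with
      | nil => simp at hq
      | cons h q => simp_all [boxProdInterleave]

theorem boxProdInterleave_boxProdDirections [DecidableEq α] [DecidableEq β]
    [DecidableRel G.Adj] [DecidableRel H.Adj] {x y : α × β} (p : (G □ H).Walk x y) :
    boxProdInterleave p.boxProdDirections p.ofBoxProdLeft p.ofBoxProdRight = p := by
  induction p with
  | nil => rfl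
  | @cons x z y h p ih =>
    obtain ⟨x₁, x₂⟩ := x
    obtain ⟨z₁, z₂⟩ := z
    rcases boxProd_adj.1 h with ⟨-, rfl⟩ | ⟨-, rfl⟩ <;> simp [boxProdInterleave, ih]

theorem length_ofBoxProd_eq_dist [DecidableEq α] [DecidableEq β] [DecidableRel G.Adj]
    [DecidableRel H.Adj] {p : (G □ H).Walk (a, b) (a', b')}
    (hp : p.length = G.dist a a' + H.dist b b') :
    p.ofBoxProdLeft.length = G.dist a a' ∧ p.ofBoxProdRight.length = H.dist b b' := by
  have hsplit := p.length_boxProd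
  have hleft : G.dist a a' ≤ _ := dist_le p.ofBoxProdLeft
  have hright : H.dist b b' ≤ _ := dist_le p.ofBoxProdRight
  omega

end Walk

end SimpleGraph

section GeodesicCount

variable {α β : Type*} {G : SimpleGraph α}

lemma geodesicCount_eq_card (u v : α) : geodesicCount G u v = Nat.card (G.Geodesic u v) :=
  Nat.card_congr <| Equiv.subtypeEquivRight fun p =>
    ⟨And.right, fun hp => ⟨p.isPath_of_length_eq_dist hp, hp⟩⟩

lemma geodesicCountThrough_eq_card (u v x : α) :
    geodesicCountThrough G u v x = Nat.card {p : G.Geodesic u v // x ∈ p.1.support} :=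
  Nat.card_congr
    { toFun p := ⟨⟨p.1, p.2.2.1⟩, p.2.2.2⟩
      invFun p := ⟨p.1.1, p.1.1.isPath_of_length_eq_dist p.1.2, p.1.2, p.2⟩ }

lemma geodesicCountThrough_eq (u v x : α) :
    geodesicCountThrough G u v x =
      if G.dist u x + G.dist x v = G.dist u v then geodesicCount G u x * geodesicCount G x v
      else 0 := by
  classical
  rw [geodesicCountThrough_eq_card]
  split_ifs with hsum
  · rw [geodesicCount_eq_card, geodesicCount_eq_card, ← Nat.card_prod]
    symm
    refine Nat.card_eq_of_bijective
      (fun qr => ⟨⟨qr.1.1.append qr.2.1, by rw [Walk.length_append, qr.1.2, qr.2.2, hsum]⟩,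
        Walk.mem_support_append_iff _ _ |>.2 (.inl qr.1.1.end_mem_support)⟩) ⟨?_, ?_⟩
    · rintro ⟨⟨q, hq⟩, r, hr⟩ ⟨⟨q', hq'⟩, r', hr'⟩ h
      obtain ⟨rfl, rfl⟩ := Walk.append_inj (congrArg (·.1.1) h) (hq.trans hq'.symm)
      rfl
    · rintro ⟨⟨p, hp⟩, hx⟩
      obtain ⟨htake, hdrop⟩ := Walk.length_takeUntil_dropUntil_eq_dist hp hx
      exact ⟨(⟨_, htake⟩, ⟨_, hdrop⟩), by simp [Walk.take_spec]⟩
  · refine Nat.card_eq_zero.2 (.inl ⟨fun ⟨⟨p, hp⟩, hx⟩ => hsum ?_⟩)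
    obtain ⟨htake, hdrop⟩ := Walk.length_takeUntil_dropUntil_eq_dist hp hx
    rw [← htake, ← hdrop, ← Walk.length_append, Walk.take_spec, hp]

theorem geodesicCount_boxProd {H : SimpleGraph β} {g g' : α} {h h' : β}
    (hG : G.Reachable g g') (hH : H.Reachable h h') :
    geodesicCount (G □ H) (g, h) (g', h') =
      geodesicCount G g g' * geodesicCount H h h' *
        (G.dist g g' + H.dist h h').choose (G.dist g g') := by
  classical
  have hdist : (G □ H).dist (g, h) (g', h') = G.dist g g' + H.dist h h' := dist_boxProd hG hH
  have e : (G □ H).Geodesic (g, h) (g', h') ≃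
      {L : List Bool // L.count true = G.dist g g' ∧ L.count false = H.dist h h'} ×
        G.Geodesic g g' × H.Geodesic h h' :=
    { toFun p :=
        have hlen := Walk.length_ofBoxProd_eq_dist (p.2.trans hdist)
        (⟨p.1.boxProdDirections, by rw [Walk.count_true_boxProdDirections, hlen.1],
            by rw [Walk.count_false_boxProdDirections, hlen.2]⟩,
          ⟨_, hlen.1⟩, ⟨_, hlen.2⟩)
      invFun t :=
        have hspec := Walk.boxProdInterleave_spec t.1.1 t.2.1.1 t.2.2.1
          (t.2.1.2.trans t.1.2.1.symm) (t.2.2.2.trans t.1.2.2.symm)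
        ⟨Walk.boxProdInterleave t.1.1 t.2.1.1 t.2.2.1, by
          rw [Walk.length_boxProd, hspec.2.1, hspec.2.2, t.2.1.2, t.2.2.2, hdist]⟩
      left_inv p := Subtype.ext (Walk.boxProdInterleave_boxProdDirections p.1)
      right_inv := by
        rintro ⟨⟨L, hL⟩, ⟨q, hq⟩, ⟨r, hr⟩⟩
        obtain ⟨hL', hq', hr'⟩ :=
          Walk.boxProdInterleave_spec L q r (hq.trans hL.1.symm) (hr.trans hL.2.symm)
        simp only [hL', hq', hr'] }
  rw [geodesicCount_eq_card, geodesicCount_eq_card, geodesicCount_eq_card, Nat.card_congr e,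
    Nat.card_prod, Nat.card_prod, List.card_bool_count_eq_choose]
  ring

end GeodesicCount

theorem pairDependency_boxProd_general {V W : Type*}
    (G : SimpleGraph V) (H : SimpleGraph W) (hG : G.Connected) (hH : H.Connected)
    (g g' g₀ : V) (h h' h₀ : W) :
    pairDependency (G □ H) (g, h) (g', h') (g₀, h₀) =
      pairDependency G g g' g₀ * pairDependency H h h' h₀ *
        (((G.dist g g₀ + H.dist h h₀).choose (G.dist g g₀) : ℚ) *
          ((G.dist g₀ g' + H.dist h₀ h').choose (G.dist g₀ g') : ℚ) /
            ((G.dist g g' + H.dist h h').choose (G.dist g g') : ℚ)) := by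
  have hdist (a a' : V) (b b' : W) :
      (G □ H).dist (a, b) (a', b') = G.dist a a' + H.dist b b' :=
    dist_boxProd (hG.preconnected a a') (hH.preconnected b b')
  have hcount (a a' : V) (b b' : W) :=
    geodesicCount_boxProd (hG.preconnected a a') (hH.preconnected b b')
  have htriG : G.dist g g' ≤ G.dist g g₀ + G.dist g₀ g' := hG.dist_triangle
  have htriH : H.dist h h' ≤ H.dist h h₀ + H.dist h₀ h' := hH.dist_triangle
  simp only [pairDependency, geodesicCountThrough_eq, hdist, hcount]
  by_cases hsumG : G.dist g g₀ + G.dist g₀ g' = G.dist g g'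
  · by_cases hsumH : H.dist h h₀ + H.dist h₀ h' = H.dist h h'
    · rw [if_pos (by omega), if_pos hsumG, if_pos hsumH]
      push_cast
      -- `ring` normalises `(a * b)⁻¹ = a⁻¹ * b⁻¹`, so no count has to be nonzero
      ring
    · rw [if_neg (by omega), if_neg hsumH]
      simp
  · rw [if_neg (by omega), if_neg hsumG]
    simp

/-- For distinct vertices `u = (g,h)`, `v = (g',h')` of `G □ H` and a
vertex `x = (g₀,h₀)` distinct from both, the pair-dependency satisfies
`δ_{G□H}(u,v|x) = δ_G(g,g'|g₀) · δ_H(h,h'|h₀) · (d₁·d₂)/d` with the stated binomial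
coefficients `d₁`, `d₂`, `d`. -/
theorem pairDependency_boxProd {V W : Type*} [Fintype V] [Fintype W]
    (G : SimpleGraph V) (H : SimpleGraph W) (hG : G.Connected) (hH : H.Connected)
    (g g' g₀ : V) (h h' h₀ : W)
    (huv : (g, h) ≠ (g', h')) (hxu : (g₀, h₀) ≠ (g, h)) (hxv : (g₀, h₀) ≠ (g', h')) :
    pairDependency (G □ H) (g, h) (g', h') (g₀, h₀) =
      pairDependency G g g' g₀ * pairDependency H h h' h₀ *
        (((G.dist g g₀ + H.dist h h₀).choose (G.dist g g₀) : ℚ) *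
          ((G.dist g₀ g' + H.dist h₀ h').choose (G.dist g₀ g') : ℚ) /
            ((G.dist g g' + H.dist h h').choose (G.dist g g') : ℚ)) :=
  pairDependency_boxProd_general G H hG hH g g' g₀ h h' h₀
end

section
/- For finite connected simple graphs G and H, the Wiener index of the Cartesian product satisfies W(G□H) = |G|²·W(H) + |H|²·W(G). -/
open SimpleGraph Finset

/-- The Wiener index of `G`: the sum of the distances over all unordered pairs of
vertices (the diagonal contributes `0`, hence the factor `1/2` over ordered pairs). -/
noncomputable def wiener {V : Type*} [Fintype V] (G : SimpleGraph V) : ℚ :=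
  (1 / 2) * ∑ u, ∑ v, (G.dist u v : ℚ)

/-!
Distances in `G □ H` add coordinatewise. Summing `d_G(a,c) + d_H(b,d)` over all ordered pairs
`((a,b),(c,d))`, each `d_G(a,c)` is counted once for every choice of `b` and `d`, that is
`|H|²` times, and symmetrically each `d_H(b,d)` is counted `|G|²` times.
-/

lemma SimpleGraph.dist_boxProd_s8 {α β : Type*} {G : SimpleGraph α} {H : SimpleGraph β}
    {x y : α × β} (hG : G.Reachable x.1 y.1) (hH : H.Reachable x.2 y.2) :
    (G □ H).dist x y = G.dist x.1 y.1 + H.dist x.2 y.2 := by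
  have hGH : (G □ H).Reachable x y := reachable_boxProd.2 ⟨hG, hH⟩
  apply Nat.cast_injective (R := ℕ∞)
  rw [Nat.cast_add, hGH.coe_dist_eq_edist, hG.coe_dist_eq_edist, hH.coe_dist_eq_edist,
    edist_boxProd]

lemma Fintype.sum_sum_prod_add {α β R : Type*} [Fintype α] [Fintype β] [CommSemiring R]
    (f : α → α → R) (g : β → β → R) :
    ∑ x : α × β, ∑ y : α × β, (f x.1 y.1 + g x.2 y.2) =
      (card β : R) ^ 2 * ∑ a, ∑ c, f a c + (card α : R) ^ 2 * ∑ b, ∑ d, g b d := by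
  simp only [Fintype.sum_prod_type, sum_add_distrib, sum_const, card_univ, nsmul_eq_mul,
    ← mul_sum]
  ring

/-- For finite connected graphs `G`, `H`:
`W(G □ H) = |G|²·W(H) + |H|²·W(G)`. -/
theorem wiener_boxProd {V W : Type*} [Fintype V] [Fintype W]
    (G : SimpleGraph V) (H : SimpleGraph W) (hG : G.Connected) (hH : H.Connected) :
    wiener (G □ H) =
      (Fintype.card V : ℚ) ^ 2 * wiener H + (Fintype.card W : ℚ) ^ 2 * wiener G := by
  have hdist (x y : V × W) : ((G □ H).dist x y : ℚ) = G.dist x.1 y.1 + H.dist x.2 y.2 := by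
    exact_mod_cast dist_boxProd_s8 (hG x.1 y.1) (hH x.2 y.2)
  simp only [wiener, hdist]
  rw [Fintype.sum_sum_prod_add (fun a c => (G.dist a c : ℚ)) (fun b d => (H.dist b d : ℚ))]
  ring
end
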